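/- Any two distinct tropical lines in R^2 in general position (i.e. with distinct vertices (a,b), (a',b') such that a - a' ≠ b - b', a ≠ a', and b ≠ b') intersect in exactly one point. -/

import Mathlib

/-!
Each tropical line is a union of three closed half-rays, so membership is a disjunction of linear
conditions and every pairwise intersection can be read off by linear arithmetic. Exchanging the
two lines, and reflecting both in the diagonal (which fixes the shape of a tropical line), reduces
the general-position configurations to two: if the second vertex lies to the lower right of the
first, the lines meet at `(a, b')`; if it lies to the upper right, below the diagonal ray of the
first line, they meet where that diagonal ray hits the horizontal ray of the second line.
-/

/-- The tropical line in `ℝ²` with vertex `(a,b)`: the union of the three rays from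
`(a,b)` in directions `(-1,0)`, `(0,-1)` and `(1,1)`. -/
def tropLine (a b : ℝ) : Set (ℝ × ℝ) :=
  {P : ℝ × ℝ | ∃ t : ℝ, 0 ≤ t ∧ P = (a - t, b)}
    ∪ {P : ℝ × ℝ | ∃ t : ℝ, 0 ≤ t ∧ P = (a, b - t)}
    ∪ {P : ℝ × ℝ | ∃ t : ℝ, 0 ≤ t ∧ P = (a + t, b + t)}

theorem mem_tropLine_iff {a b : ℝ} {P : ℝ × ℝ} :
    P ∈ tropLine a b ↔
      (P.1 ≤ a ∧ P.2 = b) ∨ (P.1 = a ∧ P.2 ≤ b) ∨ (a ≤ P.1 ∧ P.2 - b = P.1 - a) := by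
  obtain ⟨x, y⟩ := P
  simp only [tropLine, Set.mem_union, Set.mem_ofPred_eq, Prod.mk.injEq, or_assoc]
  refine or_congr ?_ (or_congr ?_ ?_)
  · exact ⟨fun ⟨t, ht, hx, hy⟩ => ⟨by linarith, hy⟩,
      fun ⟨hx, hy⟩ => ⟨a - x, by linarith, by ring, hy⟩⟩
  · exact ⟨fun ⟨t, ht, hx, hy⟩ => ⟨hx, by linarith⟩,
      fun ⟨hx, hy⟩ => ⟨b - y, by linarith, hx, by ring⟩⟩
  · exact ⟨fun ⟨t, ht, hx, hy⟩ => ⟨by linarith, by linarith⟩,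
      fun ⟨hx, hy⟩ => ⟨x - a, by linarith, by ring, by linarith⟩⟩

theorem swap_mem_tropLine {a b : ℝ} {P : ℝ × ℝ} (h : P ∈ tropLine a b) :
    P.swap ∈ tropLine b a := by
  rw [mem_tropLine_iff] at h
  rw [mem_tropLine_iff, Prod.fst_swap, Prod.snd_swap]
  rcases h with ⟨h₁, h₂⟩ | ⟨h₁, h₂⟩ | ⟨h₁, h₂⟩
  exacts [Or.inr (Or.inl ⟨h₂, h₁⟩), Or.inl ⟨h₂, h₁⟩, Or.inr (Or.inr ⟨by linarith, h₂.symm⟩)]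

theorem image_swap_tropLine (a b : ℝ) : Prod.swap '' tropLine a b = tropLine b a := by
  ext P
  rw [Set.image_swap_eq_preimage_swap, Set.mem_preimage]
  exact ⟨fun h => by simpa using swap_mem_tropLine h, swap_mem_tropLine⟩

theorem tropLine_inter_of_lt_of_gt {a b a' b' : ℝ} (ha : a < a') (hb : b' < b) :
    tropLine a b ∩ tropLine a' b' = {(a, b')} := by
  ext ⟨x, y⟩
  simp only [Set.mem_inter_iff, mem_tropLine_iff, Set.mem_singleton_iff, Prod.mk.injEq]
  constructor
  · rintro ⟨h | h | h, h' | h' | h'⟩ <;> constructor <;> linarith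
  · rintro ⟨rfl, rfl⟩
    exact ⟨Or.inr (Or.inl ⟨rfl, hb.le⟩), Or.inl ⟨ha.le, rfl⟩⟩

theorem tropLine_inter_of_lt_of_sub_lt_sub {a b a' b' : ℝ} (hb : b < b') (hd : b' - b < a' - a) :
    tropLine a b ∩ tropLine a' b' = {(a + (b' - b), b')} := by
  ext ⟨x, y⟩
  simp only [Set.mem_inter_iff, mem_tropLine_iff, Set.mem_singleton_iff, Prod.mk.injEq]
  constructor
  · rintro ⟨h | h | h, h' | h' | h'⟩ <;> constructor <;> linarith
  · rintro ⟨rfl, rfl⟩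
    exact ⟨Or.inr (Or.inr ⟨by linarith, by ring⟩), Or.inl ⟨by linarith, rfl⟩⟩

theorem exists_tropLine_inter_eq_singleton {a b a' b' : ℝ} (ha : a ≠ a') (hb : b ≠ b')
    (hd : a - a' ≠ b - b') : ∃ p, tropLine a b ∩ tropLine a' b' = {p} := by
  wlog haa : a < a' generalizing a b a' b'
  · obtain ⟨p, hp⟩ := this ha.symm hb.symm (fun h => hd (by linarith))
      (lt_of_le_of_ne (not_lt.1 haa) ha.symm)
    exact ⟨p, by rwa [Set.inter_comm]⟩
  rcases hb.lt_or_gt with hbb | hbb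
  · rcases hd.lt_or_gt with hdd | hdd
    · exact ⟨_, tropLine_inter_of_lt_of_sub_lt_sub hbb (by linarith)⟩
    · refine ⟨(b + (a' - a), a').swap, ?_⟩
      rw [← image_swap_tropLine b a, ← image_swap_tropLine b' a',
        ← Set.image_inter Prod.swap_injective, tropLine_inter_of_lt_of_sub_lt_sub haa (by linarith),
        Set.image_singleton]
  · exact ⟨_, tropLine_inter_of_lt_of_gt haa hbb⟩

theorem tropical_lines_intersect_uniquely_general (a b a' b' : ℝ)
    (hd : a - a' ≠ b - b') (ha : a ≠ a') (hb : b ≠ b') :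
    ∃! P : ℝ × ℝ, P ∈ tropLine a b ∩ tropLine a' b' :=
  Set.singleton_iff_unique_mem.1 (exists_tropLine_inter_eq_singleton ha hb hd)

/-- Two tropical lines in general position (distinct vertices with
`a - a' ≠ b - b'`, `a ≠ a'`, `b ≠ b'`) intersect in exactly one point. -/
theorem tropical_lines_intersect_uniquely (a b a' b' : ℝ)
    (hvert : (a, b) ≠ (a', b')) (hd : a - a' ≠ b - b') (ha : a ≠ a') (hb : b ≠ b') :
    ∃! P : ℝ × ℝ, P ∈ tropLine a b ∩ tropLine a' b' :=
  tropical_lines_intersect_uniquely_general a b a' b' hd ha hb
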